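/- arXiv:0812.2260 — 7 statements merged into one kernel-verified Lean document; each statement's English description precedes it below -/
import Mathlib

section
/- Let φ : ℝ^m → ℝ be a linear functional and let p ≥ 1 be an integer. Then the p-th average componentwise condition number satisfies κ_av^[p](φ) = [(1/√π) · (Γ(m/2)/Γ((m+p)/2)) · Γ((p+1)/2)]^{1/p} · ‖φ‖, where ‖φ‖ is the operator norm of φ. In particular, for p = 2, κ_av(φ) = ‖φ‖/√m. -/
/-!
Compute the Gaussian moment `∫ |φ x| ^ p * exp (-‖x‖ ^ 2)` in two ways. In polar
coordinates, positive homogeneity of `|φ| ^ p` splits it as the sphere integral of `|φ| ^ p`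
times the radial integral `Γ((m + p) / 2) / 2`. After a rotation taking the unit vector
representing `φ / ‖φ‖` to the first coordinate vector, the Gaussian factorises over the
coordinates and the moment equals `‖φ‖ ^ p * Γ((p + 1) / 2) * √π ^ (m - 1)`. The same two
computations for the constant function `1` (`p = 0`) give the area of the sphere,
`2 √π ^ m / Γ(m / 2)`.
-/

open MeasureTheory Metric Set Real Measure
open scoped RealInnerProductSpace

lemma integral_Ioi_pow_mul_exp_neg_sq (n : ℕ) :
    ∫ x in Ioi (0 : ℝ), x ^ n * exp (-x ^ 2) = Gamma ((n + 1) / 2) / 2 := by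
  have h := integral_rpow_mul_exp_neg_rpow two_pos
    (lt_of_lt_of_le neg_one_lt_zero (Nat.cast_nonneg' n))
  norm_num only [rpow_natCast, rpow_ofNat] at h
  rw [h, one_div_mul_eq_div]

lemma integral_abs_pow_mul_exp_neg_sq (n : ℕ) :
    ∫ t : ℝ, |t| ^ n * exp (-t ^ 2) = Gamma ((n + 1) / 2) := by
  have h := integral_comp_abs (f := fun s => s ^ n * exp (-s ^ 2))
  simp only [sq_abs] at h
  rw [h, integral_Ioi_pow_mul_exp_neg_sq]
  ring

lemma integral_exp_neg_sq : ∫ t : ℝ, exp (-t ^ 2) = √π := by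
  simpa using integral_gaussian 1

lemma integral_volumeIoiPow_pow_mul_exp_neg_sq (n p : ℕ) :
    ∫ r : Ioi (0 : ℝ), (r : ℝ) ^ p * exp (-(r : ℝ) ^ 2) ∂volumeIoiPow n
      = Gamma ((n + p + 1) / 2) / 2 := by
  rw [volumeIoiPow, integral_withDensity_eq_integral_toReal_smul
      (measurable_subtype_coe.pow_const n).ennreal_ofReal
      (ae_of_all _ fun _ => ENNReal.ofReal_lt_top),
    integral_subtype_comap measurableSet_Ioi
      fun r : ℝ => (ENNReal.ofReal (r ^ n)).toReal • (r ^ p * exp (-r ^ 2))]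
  have hpow : ∀ r ∈ Ioi (0 : ℝ),
      (ENNReal.ofReal (r ^ n)).toReal • (r ^ p * exp (-r ^ 2)) = r ^ (n + p) * exp (-r ^ 2) :=
    fun r hr => by
      rw [ENNReal.toReal_ofReal (pow_nonneg (le_of_lt hr) n), smul_eq_mul, pow_add, mul_assoc]
  rw [setIntegral_congr_fun measurableSet_Ioi hpow, integral_Ioi_pow_mul_exp_neg_sq, Nat.cast_add]

lemma integral_mul_exp_neg_sq_norm_of_homogeneous {E : Type*} [NormedAddCommGroup E]
    [NormedSpace ℝ E] [FiniteDimensional ℝ E] [MeasurableSpace E] [BorelSpace E] [Nontrivial E]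
    (μ : Measure E) [μ.IsAddHaarMeasure] {f : E → ℝ} {p : ℕ}
    (hf : ∀ (r : ℝ) x, 0 < r → f (r • x) = r ^ p * f x) :
    ∫ x, f x * exp (-‖x‖ ^ 2) ∂μ
      = (∫ ω : sphere (0 : E) 1, f ω ∂μ.toSphere) *
          (Gamma ((Module.finrank ℝ E + p) / 2) / 2) := by
  have hpolar : ∀ x : ({0}ᶜ : Set E), f x * exp (-‖(x : E)‖ ^ 2) =
      f (homeomorphUnitSphereProd E x).1 * ((homeomorphUnitSphereProd E x).2 ^ p *
        exp (-((homeomorphUnitSphereProd E x).2 : ℝ) ^ 2)) := fun x => by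
    have hx : 0 < ‖(x : E)‖ := norm_pos_iff.mpr x.2
    have hfx : f x = ‖(x : E)‖ ^ p * f (‖(x : E)‖⁻¹ • x) := by
      rw [← hf _ _ hx, smul_inv_smul₀ hx.ne']
    simp only [homeomorphUnitSphereProd_apply_fst_coe, homeomorphUnitSphereProd_apply_snd_coe]
    rw [hfx]
    ring
  calc ∫ x, f x * exp (-‖x‖ ^ 2) ∂μ
      = ∫ x : ({0}ᶜ : Set E), f x * exp (-‖(x : E)‖ ^ 2) ∂μ.comap (↑) := by
        rw [integral_subtype_comap (measurableSet_singleton _).compl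
          (fun x => f x * exp (-‖x‖ ^ 2)), restrict_compl_singleton]
    _ = ∫ z : sphere (0 : E) 1 × Ioi (0 : ℝ),
          f z.1 * ((z.2 : ℝ) ^ p * exp (-(z.2 : ℝ) ^ 2))
          ∂(μ.toSphere.prod (volumeIoiPow (Module.finrank ℝ E - 1))) := by
        simp only [hpolar]
        exact μ.measurePreserving_homeomorphUnitSphereProd.integral_comp
          (Homeomorph.measurableEmbedding _)
          fun z => f z.1 * ((z.2 : ℝ) ^ p * exp (-(z.2 : ℝ) ^ 2))
    _ = _ := by
        rw [integral_prod_mul (fun ω : sphere (0 : E) 1 => f ω)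
          (fun r : Ioi (0 : ℝ) => (r : ℝ) ^ p * exp (-(r : ℝ) ^ 2)),
          integral_volumeIoiPow_pow_mul_exp_neg_sq, Nat.cast_pred Module.finrank_pos,
          add_right_comm, sub_add_cancel]

lemma EuclideanSpace.integral_comp_apply_mul_exp_neg_sq_norm {ι : Type*} [Fintype ι]
    [DecidableEq ι] (i : ι) (f : ℝ → ℝ) :
    ∫ y : EuclideanSpace ℝ ι, f (y i) * exp (-‖y‖ ^ 2)
      = (∫ t, f t * exp (-t ^ 2)) * √π ^ (Fintype.card ι - 1) := by
  have hsplit : ∀ z : ι → ℝ, f (z i) * exp (-‖WithLp.toLp 2 z‖ ^ 2)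
      = ∏ j, (if j = i then f (z j) else 1) * exp (-z j ^ 2) := fun z => by
    rw [EuclideanSpace.norm_eq, sq_sqrt (by positivity), ← Finset.sum_neg_distrib, exp_sum,
      Finset.prod_mul_distrib, Finset.prod_ite_eq' Finset.univ i]
    simp
  rw [← (PiLp.volume_preserving_toLp ι).integral_comp
    (MeasurableEquiv.toLp 2 (ι → ℝ)).measurableEmbedding]
  simp only [hsplit, volume_pi]
  rw [integral_fintype_prod_eq_prod (fun j t => (if j = i then f t else 1) * exp (-t ^ 2)),
    ← Finset.mul_prod_erase _ _ (Finset.mem_univ i)]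
  have hrest : ∀ j ∈ Finset.univ.erase i,
      ∫ t, (if j = i then f t else 1) * exp (-t ^ 2) = √π := fun j hj => by
    simpa [if_neg (Finset.ne_of_mem_erase hj)] using integral_exp_neg_sq
  rw [Finset.prod_congr rfl hrest, Finset.prod_const,
    Finset.card_erase_of_mem (Finset.mem_univ i), Finset.card_univ]
  simp only [↓reduceIte]

lemma ContinuousLinearMap.exists_norm_eq_one_eq_norm_mul_inner {E : Type*}
    [NormedAddCommGroup E] [InnerProductSpace ℝ E] [CompleteSpace E] [Nontrivial E]
    (φ : E →L[ℝ] ℝ) : ∃ u : E, ‖u‖ = 1 ∧ ∀ x, φ x = ‖φ‖ * ⟪u, x⟫ := by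
  set v := (InnerProductSpace.toDual ℝ E).symm φ
  have hφv : ∀ x, φ x = ⟪v, x⟫ := fun x => InnerProductSpace.toDual_symm_apply.symm
  have hv : ‖v‖ = ‖φ‖ := LinearIsometryEquiv.norm_map _ _
  by_cases hv0 : v = 0
  · obtain ⟨u, hu⟩ := exists_norm_eq E zero_le_one
    exact ⟨u, hu, fun x => by rw [hφv, ← hv, hv0]; simp⟩
  · refine ⟨‖v‖⁻¹ • v, norm_smul_inv_norm hv0, fun x => ?_⟩
    rw [hφv, real_inner_smul_left, ← hv, mul_inv_cancel_left₀ (norm_ne_zero_iff.mpr hv0)]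

noncomputable def sphereMomentConst (d p : ℝ) : ℝ :=
  1 / √π * (Gamma (d / 2) / Gamma ((d + p) / 2)) * Gamma ((p + 1) / 2)

lemma sphereMomentConst_nonneg {d p : ℝ} (hd : 0 < d) (hp : 0 ≤ p) :
    0 ≤ sphereMomentConst d p := by
  unfold sphereMomentConst
  have : 0 < Gamma ((d + p) / 2) := Gamma_pos_of_pos (by positivity)
  positivity

lemma sphereMomentConst_two {d : ℝ} (hd : 0 < d) : sphereMomentConst d 2 = 1 / d := by
  have hΓ : 0 < Gamma (d / 2) := Gamma_pos_of_pos (by positivity)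
  rw [sphereMomentConst, show (d + 2) / 2 = d / 2 + 1 by ring, Gamma_add_one (by positivity),
    show (2 + 1 : ℝ) / 2 = 1 / 2 + 1 by norm_num, Gamma_add_one (by norm_num), Gamma_one_half_eq]
  field_simp

section InnerProductSpace

variable {E : Type*} [NormedAddCommGroup E] [InnerProductSpace ℝ E] [FiniteDimensional ℝ E]
  [MeasurableSpace E] [BorelSpace E]

lemma integral_comp_inner_mul_exp_neg_sq_norm {u : E} (hu : ‖u‖ = 1) (f : ℝ → ℝ) :
    ∫ x : E, f ⟪u, x⟫ * exp (-‖x‖ ^ 2)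
      = (∫ t, f t * exp (-t ^ 2)) * √π ^ (Module.finrank ℝ E - 1) := by
  have : Nontrivial E := nontrivial_of_ne u 0 (norm_ne_zero_iff.mp (by simp [hu]))
  set i : Fin (Module.finrank ℝ E) := ⟨0, Module.finrank_pos⟩
  have hu' : Orthonormal ℝ (({i} : Set _).domRestrict fun _ => u) :=
    orthonormal_subsingleton_iff.mpr fun _ => hu
  obtain ⟨b, hb⟩ := hu'.exists_orthonormalBasis_extension_of_card_eq (by simp)
  have hinner : ∀ x, ⟪u, x⟫ = b.repr x i := fun x => by
    rw [b.repr_apply_apply, hb i rfl]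
  calc ∫ x : E, f ⟪u, x⟫ * exp (-‖x‖ ^ 2)
      = ∫ x : E, f (b.repr x i) * exp (-‖b.repr x‖ ^ 2) := by
        simp only [hinner, LinearIsometryEquiv.norm_map]
    _ = ∫ y : EuclideanSpace ℝ _, f (y i) * exp (-‖y‖ ^ 2) :=
        integral_comp b.repr fun y => f (y i) * exp (-‖y‖ ^ 2)
    _ = _ := by rw [EuclideanSpace.integral_comp_apply_mul_exp_neg_sq_norm, Fintype.card_fin]

lemma integral_abs_pow_mul_exp_neg_sq_norm [Nontrivial E] (φ : E →L[ℝ] ℝ) (p : ℕ) :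
    ∫ x : E, |φ x| ^ p * exp (-‖x‖ ^ 2)
      = ‖φ‖ ^ p * Gamma ((p + 1) / 2) * √π ^ (Module.finrank ℝ E - 1) := by
  obtain ⟨u, hu, hφ⟩ := φ.exists_norm_eq_one_eq_norm_mul_inner
  simp only [hφ]
  rw [integral_comp_inner_mul_exp_neg_sq_norm hu fun t => |‖φ‖ * t| ^ p]
  simp only [abs_mul, abs_norm, mul_pow, mul_assoc]
  rw [integral_const_mul, integral_abs_pow_mul_exp_neg_sq, mul_assoc]

lemma toSphere_univ_toReal_mul_Gamma [Nontrivial E] :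
    ((volume : Measure E).toSphere univ).toReal * (Gamma (Module.finrank ℝ E / 2) / 2)
      = √π ^ Module.finrank ℝ E := by
  obtain ⟨u, hu⟩ := exists_norm_eq E zero_le_one
  have hpolar := integral_mul_exp_neg_sq_norm_of_homogeneous (volume : Measure E)
    (f := fun _ => 1) (p := 0) fun _ _ _ => by simp
  have hgauss := integral_comp_inner_mul_exp_neg_sq_norm hu fun _ => 1
  simp only [one_mul, integral_const, smul_eq_mul, mul_one, CharP.cast_eq_zero, add_zero,
    measureReal_def] at hpolar hgauss
  rw [← hpolar, hgauss, integral_exp_neg_sq, ← pow_succ', Nat.sub_add_cancel Module.finrank_pos]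

theorem sphere_average_abs_pow [Nontrivial E] (φ : E →L[ℝ] ℝ) (p : ℕ) :
    1 / ((volume : Measure E).toSphere univ).toReal *
        ∫ ω : sphere (0 : E) 1, |φ ω| ^ p ∂(volume : Measure E).toSphere
      = sphereMomentConst (Module.finrank ℝ E) p * ‖φ‖ ^ p := by
  have hmoment := integral_abs_pow_mul_exp_neg_sq_norm φ p
  rw [integral_mul_exp_neg_sq_norm_of_homogeneous volume fun r x hr => by
    rw [map_smul, smul_eq_mul, abs_mul, abs_of_pos hr, mul_pow]] at hmoment
  have hvol := toSphere_univ_toReal_mul_Gamma (E := E)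
  set d := Module.finrank ℝ E
  have hd : (0 : ℝ) < d := Nat.cast_pos.mpr Module.finrank_pos
  have hΓd : 0 < Gamma (d / 2) := Gamma_pos_of_pos (by positivity)
  have hΓdp : 0 < Gamma ((d + p) / 2) := Gamma_pos_of_pos (by positivity)
  have hπ : 0 < √π := sqrt_pos.mpr pi_pos
  have hpow : √π ^ d = √π ^ (d - 1) * √π := by
    rw [← pow_succ, Nat.sub_add_cancel Module.finrank_pos]
  rw [eq_div_of_mul_eq (by positivity) hmoment, eq_div_of_mul_eq (by positivity) hvol, hpow,
    sphereMomentConst]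
  field_simp

end InnerProductSpace

/-- **Average componentwise condition number of a linear functional.**
For a linear functional `φ : ℝ^m → ℝ` and an integer `p ≥ 1`,
`κ_av^[p](φ) = [(1/√π) · (Γ(m/2)/Γ((m+p)/2)) · Γ((p+1)/2)]^{1/p} · ‖φ‖`,
where `κ_av^[p](φ)` is the `p`-th moment average of `|φ x|` over the unit sphere
`S^{m-1}` and `‖φ‖` is the operator norm of `φ`.  In particular, for `p = 2`,
`κ_av(φ) = ‖φ‖ / √m`. -/
theorem stmt_5 (m : ℕ) (hm : 1 ≤ m)
    (φ : EuclideanSpace ℝ (Fin m) →L[ℝ] ℝ) (p : ℕ) (hp : 1 ≤ p) :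
    ((1 / ((volume : Measure (EuclideanSpace ℝ (Fin m))).toSphere Set.univ).toReal) *
        (∫ x : sphere (0 : EuclideanSpace ℝ (Fin m)) 1, |φ x| ^ p
          ∂(volume : Measure (EuclideanSpace ℝ (Fin m))).toSphere)) ^ ((1 : ℝ) / p)
      = ((1 / Real.sqrt Real.pi) * (Real.Gamma (m / 2) / Real.Gamma ((m + p) / 2)) *
          Real.Gamma ((p + 1) / 2)) ^ ((1 : ℝ) / p) * ‖φ‖ ∧
      Real.sqrt ((1 / ((volume : Measure (EuclideanSpace ℝ (Fin m))).toSphere Set.univ).toReal) *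
        (∫ x : sphere (0 : EuclideanSpace ℝ (Fin m)) 1, |φ x| ^ 2
          ∂(volume : Measure (EuclideanSpace ℝ (Fin m))).toSphere))
        = ‖φ‖ / Real.sqrt m := by
  have : NeZero m := ⟨by omega⟩
  have hm' : (0 : ℝ) < m := by exact_mod_cast hm
  have havg := sphere_average_abs_pow (E := EuclideanSpace ℝ (Fin m)) φ
  simp only [finrank_euclideanSpace_fin] at havg
  refine ⟨?_, ?_⟩
  · rw [havg, mul_rpow (sphereMomentConst_nonneg hm' p.cast_nonneg) (by positivity),
      one_div (p : ℝ), pow_rpow_inv_natCast (norm_nonneg φ) (by omega), ← one_div]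
    rfl
  · rw [havg, Nat.cast_ofNat, sphereMomentConst_two hm', one_div_mul_eq_div,
      sqrt_div (sq_nonneg _), sqrt_sq (norm_nonneg φ)]
end

section
/- Let A be an invertible n×n real matrix and y ∈ ℝ^n. Consider the linear map DG : M_n(ℝ) → ℝ^n given by DG(Ȧ) = −A^{-1} Ȧ y, where M_n(ℝ) carries the Frobenius inner product and ℝ^n the Euclidean inner product. Then the operator norm of DG equals ‖A^{-1}‖ · ‖y‖, where ‖A^{-1}‖ is the operator (spectral) norm of A^{-1} and ‖y‖ is the Euclidean norm of y. -/
/-!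
Write `B = A⁻¹`. Since `‖Ȧ y‖ ≤ ‖Ȧ‖_F ‖y‖` (Cauchy–Schwarz row by row), `‖B Ȧ y‖ ≤ ‖B‖ ‖y‖` whenever
`‖Ȧ‖_F = 1`. Equality is attained by the rank-one matrix `Ȧ = u wᵀ`, where `u` is a unit vector with
`‖B u‖ = ‖B‖` (compactness of the sphere) and `w` is the unit vector in the direction of `y`: then
`‖Ȧ‖_F = ‖u‖ ‖w‖ = 1` and `Ȧ y = ‖y‖ u`.
-/

open Matrix

theorem ContinuousLinearMap.exists_norm_eq_one_norm_apply_eq_opNorm {E F : Type*}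
    [NormedAddCommGroup E] [NormedSpace ℝ E] [FiniteDimensional ℝ E] [Nontrivial E]
    [SeminormedAddCommGroup F] [NormedSpace ℝ F] (f : E →L[ℝ] F) :
    ∃ u : E, ‖u‖ = 1 ∧ ‖f u‖ = ‖f‖ := by
  have h := ((isCompact_sphere (0 : E) 1).image (by fun_prop : Continuous fun x => ‖f x‖)).sSup_mem
    ((NormedSpace.sphere_nonempty.mpr zero_le_one).image _)
  rw [f.sSup_sphere_eq_norm] at h
  obtain ⟨u, hu, hfu⟩ := h
  exact ⟨u, mem_sphere_zero_iff_norm.mp hu, hfu⟩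

theorem exists_norm_eq_one_inner_eq_norm {E : Type*} [NormedAddCommGroup E]
    [InnerProductSpace ℝ E] [Nontrivial E] (y : E) :
    ∃ w : E, ‖w‖ = 1 ∧ inner ℝ w y = ‖y‖ := by
  rcases eq_or_ne y 0 with rfl | hy
  · obtain ⟨w, hw⟩ := exists_norm_eq E zero_le_one
    exact ⟨w, hw, by simp⟩
  · refine ⟨‖y‖⁻¹ • y, norm_smul_inv_norm hy, ?_⟩
    rw [real_inner_smul_left, real_inner_self_eq_norm_sq]
    field_simp

theorem norm_toEuclideanLin_apply_le_sqrt_sum_sq {m n : Type*} [Fintype m] [Fintype n]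
    [DecidableEq n] (M : Matrix m n ℝ) (v : EuclideanSpace ℝ n) :
    ‖toEuclideanLin M v‖ ≤ √(∑ i, ∑ j, M i j ^ 2) * ‖v‖ := by
  have hsq : ‖toEuclideanLin M v‖ ^ 2 ≤ (∑ i, ∑ j, M i j ^ 2) * ‖v‖ ^ 2 := by
    rw [EuclideanSpace.real_norm_sq_eq, EuclideanSpace.real_norm_sq_eq, Finset.sum_mul]
    exact Finset.sum_le_sum fun i _ => Finset.sum_mul_sq_le_sq_mul_sq _ _ _
  rw [← Real.sqrt_sq (norm_nonneg v), ← Real.sqrt_mul (by positivity)]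
  exact Real.le_sqrt_of_sq_le hsq

theorem sqrt_sum_sq_vecMulVec {m n : Type*} [Fintype m] [Fintype n] (u : EuclideanSpace ℝ m)
    (w : EuclideanSpace ℝ n) :
    √(∑ i, ∑ j, vecMulVec u w i j ^ 2) = ‖u‖ * ‖w‖ := by
  simp only [vecMulVec_apply, mul_pow, ← Finset.mul_sum, ← Finset.sum_mul,
    ← EuclideanSpace.real_norm_sq_eq]
  rw [← mul_pow, Real.sqrt_sq (by positivity)]

theorem toEuclideanLin_vecMulVec_apply {m n : Type*} [Fintype n] [DecidableEq n]
    (u : EuclideanSpace ℝ m) (w v : EuclideanSpace ℝ n) :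
    toEuclideanLin (vecMulVec u w) v = inner ℝ w v • u := by
  ext i
  simp [toEuclideanLin, vecMulVec_mulVec, EuclideanSpace.inner_eq_star_dotProduct, dotProduct_comm,
    mul_comm]

theorem stmt_7_general (n : ℕ) (hn : 1 ≤ n) (A : Matrix (Fin n) (Fin n) ℝ)
    (y : EuclideanSpace ℝ (Fin n)) :
    IsGreatest
      {c : ℝ | ∃ dA : Matrix (Fin n) (Fin n) ℝ,
        Real.sqrt (∑ i, ∑ j, dA i j ^ 2) = 1 ∧
        c = ‖Matrix.toEuclideanLin (-(A⁻¹ * dA)) y‖}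
      (‖LinearMap.toContinuousLinearMap (Matrix.toEuclideanLin A⁻¹)‖ * ‖y‖) := by
  have : Nontrivial (EuclideanSpace ℝ (Fin n)) := by
    have : Nonempty (Fin n) := ⟨⟨0, hn⟩⟩
    infer_instance
  set F := LinearMap.toContinuousLinearMap (Matrix.toEuclideanLin A⁻¹)
  have hDG (dA : Matrix (Fin n) (Fin n) ℝ) :
      ‖toEuclideanLin (-(A⁻¹ * dA)) y‖ = ‖F (toEuclideanLin dA y)‖ := by
    rw [map_neg, LinearMap.neg_apply, norm_neg]
    simp [F, toEuclideanLin]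
  constructor
  · obtain ⟨u, hu, hFu⟩ := F.exists_norm_eq_one_norm_apply_eq_opNorm
    obtain ⟨w, hw, hwy⟩ := exists_norm_eq_one_inner_eq_norm y
    refine ⟨vecMulVec u w, by rw [sqrt_sum_sq_vecMulVec, hu, hw, one_mul], ?_⟩
    rw [hDG, toEuclideanLin_vecMulVec_apply, hwy, map_smul, norm_smul, norm_norm, hFu, mul_comm]
  · rintro c ⟨dA, hdA, rfl⟩
    calc ‖toEuclideanLin (-(A⁻¹ * dA)) y‖ = ‖F (toEuclideanLin dA y)‖ := hDG dA
      _ ≤ ‖F‖ * ‖toEuclideanLin dA y‖ := F.le_opNorm _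
      _ ≤ ‖F‖ * (√(∑ i, ∑ j, dA i j ^ 2) * ‖y‖) := by
        gcongr; exact norm_toEuclideanLin_apply_le_sqrt_sum_sq dA y
      _ = ‖F‖ * ‖y‖ := by rw [hdA, one_mul]

/-- **Condition number of linear system solving (fixed right-hand side).**
Let `A` be an invertible `n×n` real matrix and `y ∈ ℝ^n`.  The operator norm of
the condition matrix `DG(Ȧ) = -A⁻¹ Ȧ y` on `M_n(ℝ)` with the Frobenius inner
product — i.e. the maximum of `‖DG(Ȧ)‖` over matrices `Ȧ` of Frobenius norm 1 —
equals `‖A⁻¹‖ · ‖y‖`, where `‖A⁻¹‖` is the spectral (operator) norm of `A⁻¹`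
and `‖y‖` the Euclidean norm of `y`. -/
theorem stmt_7 (n : ℕ) (hn : 1 ≤ n) (A : Matrix (Fin n) (Fin n) ℝ)
    (hA : IsUnit A.det) (y : EuclideanSpace ℝ (Fin n)) :
    IsGreatest
      {c : ℝ | ∃ dA : Matrix (Fin n) (Fin n) ℝ,
        Real.sqrt (∑ i, ∑ j, dA i j ^ 2) = 1 ∧
        c = ‖Matrix.toEuclideanLin (-(A⁻¹ * dA)) y‖}
      (‖LinearMap.toContinuousLinearMap (Matrix.toEuclideanLin A⁻¹)‖ * ‖y‖) :=
  stmt_7_general n hn A y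
end

section
/- Let A be an invertible n×n real matrix and y ∈ ℝ^n. Consider the linear map DG : M_n(ℝ) → ℝ^n given by DG(Ȧ) = −A^{-1} Ȧ y. Then the Frobenius (Hilbert–Schmidt) norm of DG equals ‖A^{-1}‖_F · ‖y‖, and consequently the average condition number is κ_av = ‖A^{-1}‖_F · ‖y‖ / n, which is at most (1/√n) times the operator norm ‖A^{-1}‖·‖y‖ of DG. -/
/-!
Writing `DG(Ȧ) = -A⁻¹ Ȧ y` as a matrix acting on the coordinates of `Ȧ`, its entries are
`-(A⁻¹)ₖᵢ yⱼ`, so its Hilbert–Schmidt norm is `‖A⁻¹‖_F ‖y‖`; the images of the basis matrices give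
the same sum directly.

For the average, only the second moments of the sphere measure in `ℝᵐ` matter. Reflecting one
coordinate preserves the measure, so `∫ uₚ u_q = 0` for `p ≠ q`; swapping two coordinates does too,
so all `∫ uₚ²` agree, and since they sum to the total mass each is `vol(Sᵐ⁻¹) / m`. Hence the mean
of `‖L u‖²` over the sphere is `‖L‖_F² / m`, here with `m = n²`.

Finally each column of `A⁻¹` is the image of a unit vector, so `‖A⁻¹‖_F² ≤ n ‖A⁻¹‖²`.
-/

open MeasureTheory Matrix Metric

open scoped Pointwise

theorem LinearEquiv.smul_preimage {R M N : Type*} [Semiring R] [AddCommMonoid M]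
    [AddCommMonoid N] [Module R M] [Module R N] (e : M ≃ₗ[R] N) (s : Set R) (X : Set N) :
    s • (e ⁻¹' X) = e ⁻¹' (s • X) := by
  rw [← e.image_symm_eq_preimage, ← e.image_symm_eq_preimage]
  exact (Set.image_image2_distrib_right fun a b => e.symm.map_smul a b).symm

namespace LinearIsometryEquiv

variable {E : Type*} [NormedAddCommGroup E] [NormedSpace ℝ E]

def restrictUnitSphere (e : E ≃ₗᵢ[ℝ] E) : sphere (0 : E) 1 ≃ₜ sphere (0 : E) 1 :=
  e.toHomeomorph.subtype fun x => by simp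

@[simp]
theorem coe_restrictUnitSphere_apply (e : E ≃ₗᵢ[ℝ] E) (u : sphere (0 : E) 1) :
    (e.restrictUnitSphere u : E) = e u :=
  rfl

theorem measurePreserving_restrictUnitSphere [MeasurableSpace E] [BorelSpace E] {μ : Measure E}
    (e : E ≃ₗᵢ[ℝ] E) (he : MeasurePreserving e μ μ) :
    MeasurePreserving e.restrictUnitSphere μ.toSphere μ.toSphere := by
  refine ⟨e.restrictUnitSphere.measurable, Measure.ext fun s hs => ?_⟩
  have hval :
      Subtype.val '' (e.restrictUnitSphere ⁻¹' s) = e.toLinearEquiv ⁻¹' (Subtype.val '' s) := by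
    rw [← e.restrictUnitSphere.image_symm, ← e.toLinearEquiv.image_symm_eq_preimage,
      Set.image_image, Set.image_image]
    rfl
  rw [Measure.map_apply e.restrictUnitSphere.measurable hs,
    Measure.toSphere_apply' _ (e.restrictUnitSphere.measurable hs), Measure.toSphere_apply' _ hs,
    hval, LinearEquiv.smul_preimage]
  exact congrArg _ (he.measure_preimage_emb e.toHomeomorph.measurableEmbedding _)

end LinearIsometryEquiv

section SphereMoments

variable {ι : Type*} [Fintype ι]

local notation "σ" => Measure.toSphere (volume : Measure (EuclideanSpace ℝ ι))

theorem integral_toSphere_comp_linearIsometryEquiv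
    (e : EuclideanSpace ℝ ι ≃ₗᵢ[ℝ] EuclideanSpace ℝ ι)
    (f : sphere (0 : EuclideanSpace ℝ ι) 1 → ℝ) :
    ∫ u, f (e.restrictUnitSphere u) ∂σ = ∫ u, f u ∂σ :=
  (e.measurePreserving_restrictUnitSphere e.measurePreserving).integral_comp'
    (f := e.restrictUnitSphere.toMeasurableEquiv) f

theorem integral_toSphere_coord_mul_coord_of_ne {p q : ι} (hpq : p ≠ q) :
    ∫ u, u.1 p * u.1 q ∂σ = 0 := by
  classical
  have h : ∫ u, -(u.1 p * u.1 q) ∂σ = ∫ u, u.1 p * u.1 q ∂σ := by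
    simpa [hpq.symm] using integral_toSphere_comp_linearIsometryEquiv
      (LinearIsometryEquiv.piLpCongrRight 2 fun i : ι =>
        if i = p then LinearIsometryEquiv.neg ℝ else LinearIsometryEquiv.refl ℝ ℝ)
      fun u => u.1 p * u.1 q
  rw [integral_neg] at h
  linarith

theorem integral_toSphere_coord_sq (p : ι) :
    ∫ u, u.1 p ^ 2 ∂σ = (σ).real Set.univ / Fintype.card ι := by
  classical
  have hswap (r : ι) : ∫ u, u.1 r ^ 2 ∂σ = ∫ u, u.1 p ^ 2 ∂σ := by
    simpa [LinearIsometryEquiv.piLpCongrLeft_apply] using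
      (integral_toSphere_comp_linearIsometryEquiv
        (LinearIsometryEquiv.piLpCongrLeft 2 ℝ ℝ (Equiv.swap r p)) fun u => u.1 r ^ 2).symm
  have hsum : ∑ r, ∫ u, u.1 r ^ 2 ∂σ = (σ).real Set.univ := by
    have hint (r : ι) : Integrable (fun u : sphere (0 : EuclideanSpace ℝ ι) 1 => u.1 r ^ 2) σ :=
      Continuous.integrable_of_hasCompactSupport (by fun_prop) (.of_compactSpace _)
    have hone (u : sphere (0 : EuclideanSpace ℝ ι) 1) : ∑ r, u.1 r ^ 2 = 1 := by
      rw [← EuclideanSpace.real_norm_sq_eq, norm_eq_of_mem_sphere u, one_pow]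
    rw [← integral_finsetSum _ fun r _ => hint r]
    simp [hone]
  simp only [hswap, Finset.sum_const, Finset.card_univ, nsmul_eq_mul] at hsum
  have hcard : (Fintype.card ι : ℝ) ≠ 0 := Nat.cast_ne_zero.mpr (Fintype.card_pos_iff.mpr ⟨p⟩).ne'
  rw [← hsum, mul_div_cancel_left₀ _ hcard]

theorem integral_toSphere_sq_sum_mul_coord (a : ι → ℝ) :
    ∫ u, (∑ p, a p * u.1 p) ^ 2 ∂σ = (∑ p, a p ^ 2) * (σ).real Set.univ / Fintype.card ι := by
  have hexp (u : sphere (0 : EuclideanSpace ℝ ι) 1) :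
      (∑ p, a p * u.1 p) ^ 2 = ∑ p, ∑ q, a p * a q * (u.1 p * u.1 q) := by
    rw [sq, Finset.sum_mul_sum]
    exact Finset.sum_congr rfl fun p _ => Finset.sum_congr rfl fun q _ => by ring
  have hint (p q : ι) : Integrable (fun u : sphere (0 : EuclideanSpace ℝ ι) 1 =>
      a p * a q * (u.1 p * u.1 q)) σ :=
    Continuous.integrable_of_hasCompactSupport (by fun_prop) (.of_compactSpace _)
  have hrow (p : ι) : ∫ u, ∑ q, a p * a q * (u.1 p * u.1 q) ∂σ
      = a p ^ 2 * ((σ).real Set.univ / Fintype.card ι) := by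
    rw [integral_finsetSum _ fun q _ => hint p q, Finset.sum_eq_single p]
    · simp only [integral_const_mul, ← sq, integral_toSphere_coord_sq]
    · intro q _ hqp
      rw [integral_const_mul, integral_toSphere_coord_mul_coord_of_ne hqp.symm, mul_zero]
    · simp
  simp_rw [hexp]
  rw [integral_finsetSum _ fun p _ => integrable_finsetSum _ fun q _ => hint p q]
  simp_rw [hrow]
  rw [← Finset.sum_mul, mul_div_assoc]

theorem integral_toSphere_norm_toEuclideanLin_sq [DecidableEq ι] {κ : Type*} [Fintype κ]
    (M : Matrix κ ι ℝ) :
    ∫ u, ‖toEuclideanLin M u‖ ^ 2 ∂σ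
      = (∑ k, ∑ p, M k p ^ 2) * (σ).real Set.univ / Fintype.card ι := by
  have hint (k : κ) : Integrable (fun u : sphere (0 : EuclideanSpace ℝ ι) 1 =>
      (∑ p, M k p * u.1 p) ^ 2) σ :=
    Continuous.integrable_of_hasCompactSupport (by fun_prop) (.of_compactSpace _)
  simp_rw [EuclideanSpace.real_norm_sq_eq, toLpLin_apply, mulVec, dotProduct]
  rw [integral_finsetSum _ fun k _ => hint k]
  simp_rw [integral_toSphere_sq_sum_mul_coord]
  rw [← Finset.sum_div, ← Finset.sum_mul]

theorem average_toSphere_norm_toEuclideanLin_sq [DecidableEq ι] {κ : Type*} [Fintype κ]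
    (M : Matrix κ ι ℝ) :
    1 / (σ).real Set.univ * ∫ u, ‖toEuclideanLin M u‖ ^ 2 ∂σ
      = (∑ k, ∑ p, M k p ^ 2) / Fintype.card ι := by
  rw [integral_toSphere_norm_toEuclideanLin_sq]
  rcases isEmpty_or_nonempty ι with _ | _
  · -- both sides vanish, through division by `Fintype.card ι = 0`
    simp
  · have : NeZero σ := ⟨Measure.toSphere_ne_zero _⟩
    have hvol : (σ).real Set.univ ≠ 0 := measureReal_univ_ne_zero
    field_simp

end SphereMoments

section MatrixEntries

variable {m n l : Type*} [Fintype n] [Fintype l]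

theorem mul_single_one_mulVec {R : Type*} [CommSemiring R] [DecidableEq n] [DecidableEq l]
    (B : Matrix m n R) (i : n) (j : l) (y : l → R) :
    (B * single i j (1 : R)) *ᵥ y = y j • B.col i := by
  rw [← mulVec_mulVec, single_mulVec, one_mul, ← Pi.single, mulVec_single, op_smul_eq_smul]

theorem mul_of_mulVec {R : Type*} [CommSemiring R] (B : Matrix m n R) (x : n × l → R)
    (y : l → R) :
    (B * of fun i j => x (i, j)) *ᵥ y = (of fun k (p : n × l) => B k p.1 * y p.2) *ᵥ x := by
  ext k
  simp only [mulVec, dotProduct, mul_apply, of_apply, Fintype.sum_prod_type, Finset.sum_mul]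
  rw [Finset.sum_comm]
  exact Finset.sum_congr rfl fun i _ => Finset.sum_congr rfl fun j _ => by ring

variable [Fintype m]

theorem norm_toEuclideanLin_mul_single_one_sq [DecidableEq n] [DecidableEq l]
    (B : Matrix m n ℝ) (i : n) (j : l) (y : EuclideanSpace ℝ l) :
    ‖toEuclideanLin (B * single i j (1 : ℝ)) y‖ ^ 2 = (∑ k, B k i ^ 2) * y j ^ 2 := by
  rw [EuclideanSpace.real_norm_sq_eq, Finset.sum_mul]
  simp [toLpLin_apply, mul_single_one_mulVec, mul_pow, mul_comm]

theorem sum_sum_norm_toEuclideanLin_mul_single_one_sq [DecidableEq n] [DecidableEq l]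
    (B : Matrix m n ℝ) (y : EuclideanSpace ℝ l) :
    ∑ i : n, ∑ j : l, ‖toEuclideanLin (B * single i j (1 : ℝ)) y‖ ^ 2
      = (∑ k, ∑ i, B k i ^ 2) * ‖y‖ ^ 2 := by
  simp_rw [norm_toEuclideanLin_mul_single_one_sq, ← Finset.mul_sum, ← Finset.sum_mul,
    EuclideanSpace.real_norm_sq_eq]
  rw [Finset.sum_comm]

theorem sum_sum_sq_mul_fst_snd (B : Matrix m n ℝ) (y : EuclideanSpace ℝ l) :
    ∑ k, ∑ p : n × l, (B k p.1 * y p.2) ^ 2 = (∑ k, ∑ i, B k i ^ 2) * ‖y‖ ^ 2 := by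
  simp only [EuclideanSpace.real_norm_sq_eq, Fintype.sum_prod_type, mul_pow, ← Finset.mul_sum,
    ← Finset.sum_mul]

theorem sum_sum_sq_le_card_mul_opNorm_sq [DecidableEq n] (B : Matrix m n ℝ) :
    ∑ i, ∑ j, B i j ^ 2
      ≤ Fintype.card n * ‖LinearMap.toContinuousLinearMap (toEuclideanLin B)‖ ^ 2 := by
  set T := LinearMap.toContinuousLinearMap (toEuclideanLin B)
  have hcol (j : n) : ∑ i, B i j ^ 2 ≤ ‖T‖ ^ 2 := by
    have hTj : ∑ i, B i j ^ 2 = ‖T (EuclideanSpace.single j 1)‖ ^ 2 := by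
      simp [T, EuclideanSpace.real_norm_sq_eq, toLpLin_apply]
    rw [hTj]
    gcongr
    simpa using T.le_opNorm (EuclideanSpace.single j 1)
  calc ∑ i, ∑ j, B i j ^ 2 = ∑ j, ∑ i, B i j ^ 2 := Finset.sum_comm
    _ ≤ ∑ _j : n, ‖T‖ ^ 2 := Finset.sum_le_sum fun j _ => hcol j
    _ = Fintype.card n * ‖T‖ ^ 2 := by simp

end MatrixEntries

theorem stmt_8_general (n : ℕ) (A : Matrix (Fin n) (Fin n) ℝ) (y : EuclideanSpace ℝ (Fin n)) :
    Real.sqrt (∑ i, ∑ j,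
        ‖Matrix.toEuclideanLin (-(A⁻¹ * Matrix.single i j 1)) y‖ ^ 2)
      = Real.sqrt (∑ i, ∑ j, (A⁻¹ i j) ^ 2) * ‖y‖ ∧
    Real.sqrt
        ((1 / ((volume : Measure (EuclideanSpace ℝ (Fin n × Fin n))).toSphere Set.univ).toReal) *
          ∫ x : sphere (0 : EuclideanSpace ℝ (Fin n × Fin n)) 1,
            ‖Matrix.toEuclideanLin
              (-(A⁻¹ * Matrix.of fun i j => (x : EuclideanSpace ℝ (Fin n × Fin n)) (i, j))) y‖ ^ 2
            ∂(volume : Measure (EuclideanSpace ℝ (Fin n × Fin n))).toSphere)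
      = Real.sqrt (∑ i, ∑ j, (A⁻¹ i j) ^ 2) * ‖y‖ / n ∧
    Real.sqrt (∑ i, ∑ j, (A⁻¹ i j) ^ 2) * ‖y‖ / n
      ≤ (1 / Real.sqrt n) *
          (‖LinearMap.toContinuousLinearMap (Matrix.toEuclideanLin A⁻¹)‖ * ‖y‖) := by
  have hF : 0 ≤ ∑ i, ∑ j, (A⁻¹ i j) ^ 2 := by positivity
  refine ⟨?_, ?_, ?_⟩
  · simp only [map_neg, LinearMap.neg_apply, norm_neg]
    rw [sum_sum_norm_toEuclideanLin_mul_single_one_sq, Real.sqrt_mul hF,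
      Real.sqrt_sq (norm_nonneg y)]
  · have hvec (x : EuclideanSpace ℝ (Fin n × Fin n)) :
        ‖toEuclideanLin (-(A⁻¹ * of fun i j => x (i, j))) y‖
          = ‖toEuclideanLin (of fun k (p : Fin n × Fin n) => A⁻¹ k p.1 * y p.2) x‖ := by
      rw [map_neg, LinearMap.neg_apply, norm_neg, toLpLin_apply, toLpLin_apply, mul_of_mulVec]
    simp_rw [hvec]
    rw [← measureReal_def, average_toSphere_norm_toEuclideanLin_sq]
    simp only [of_apply, sum_sum_sq_mul_fst_snd, Fintype.card_prod, Fintype.card_fin, Nat.cast_mul]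
    rw [Real.sqrt_div' _ (by positivity), Real.sqrt_mul hF, Real.sqrt_sq (norm_nonneg y),
      Real.sqrt_mul_self (Nat.cast_nonneg n)]
  · calc Real.sqrt (∑ i, ∑ j, (A⁻¹ i j) ^ 2) * ‖y‖ / n
        ≤ Real.sqrt (n * ‖LinearMap.toContinuousLinearMap (toEuclideanLin A⁻¹)‖ ^ 2) * ‖y‖ / n := by
          gcongr
          simpa using sum_sum_sq_le_card_mul_opNorm_sq A⁻¹
      _ = (1 / Real.sqrt n) *
          (‖LinearMap.toContinuousLinearMap (Matrix.toEuclideanLin A⁻¹)‖ * ‖y‖) := by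
          rw [Real.sqrt_mul (Nat.cast_nonneg n), Real.sqrt_sq (norm_nonneg _),
            ← Real.sqrt_div_self']
          ring

/-- **Average condition number for linear system solving (fixed right-hand side).**
Let `A` be an invertible `n×n` real matrix and `y ∈ ℝ^n`, and consider the
condition matrix `DG(Ȧ) = -A⁻¹ Ȧ y` on `M_n(ℝ)` with the Frobenius inner product.
Then the Frobenius (Hilbert–Schmidt) norm of `DG` (computed over the orthonormal
basis of standard basis matrices) equals `‖A⁻¹‖_F · ‖y‖`; consequently the
average condition number `κ_av = [(1/vol S^{n²-1}) ∫_{S^{n²-1}} ‖DG‖²]^{1/2}`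
equals `‖A⁻¹‖_F · ‖y‖ / n`, which is at most `(1/√n)` times the operator norm
`‖A⁻¹‖ · ‖y‖` of `DG`. -/
theorem stmt_8 (n : ℕ) (hn : 1 ≤ n) (A : Matrix (Fin n) (Fin n) ℝ)
    (hA : IsUnit A.det) (y : EuclideanSpace ℝ (Fin n)) :
    Real.sqrt (∑ i, ∑ j,
        ‖Matrix.toEuclideanLin (-(A⁻¹ * Matrix.single i j 1)) y‖ ^ 2)
      = Real.sqrt (∑ i, ∑ j, (A⁻¹ i j) ^ 2) * ‖y‖ ∧
    Real.sqrt
        ((1 / ((volume : Measure (EuclideanSpace ℝ (Fin n × Fin n))).toSphere Set.univ).toReal) *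
          ∫ x : sphere (0 : EuclideanSpace ℝ (Fin n × Fin n)) 1,
            ‖Matrix.toEuclideanLin
              (-(A⁻¹ * Matrix.of fun i j => (x : EuclideanSpace ℝ (Fin n × Fin n)) (i, j))) y‖ ^ 2
            ∂(volume : Measure (EuclideanSpace ℝ (Fin n × Fin n))).toSphere)
      = Real.sqrt (∑ i, ∑ j, (A⁻¹ i j) ^ 2) * ‖y‖ / n ∧
    Real.sqrt (∑ i, ∑ j, (A⁻¹ i j) ^ 2) * ‖y‖ / n
      ≤ (1 / Real.sqrt n) *
          (‖LinearMap.toContinuousLinearMap (Matrix.toEuclideanLin A⁻¹)‖ * ‖y‖) :=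
  stmt_8_general n A y
end

section
/- Let A be an invertible n×n real matrix, b ∈ ℝ^n, y = A^{-1}b, and DG : M_n(ℝ) × ℝ^n → ℝ^n the linear map DG(Ȧ, ḃ) = A^{-1}(ḃ − Ȧ y). Then the average condition number of DG equals (‖A^{-1}‖_F · √(1 + ‖y‖²)) / √(n² + n), which is at most 1/√(n+1) times the operator norm ‖A^{-1}‖·√(1+‖y‖²) of DG. -/
/-!
`‖DG x‖²` is `∑ₖ ⟪x, rₖ⟫²` over the rows `rₖ` of the matrix of `DG`. A reflection carries any
vector to any other of the same norm and preserves the sphere measure `σ`, so `∫ ⟪x, v⟫² dσ`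
depends only on `‖v‖`; summing over an orthonormal basis, where `∑ᵢ ⟪x, bᵢ⟫² = 1` on the sphere,
gives `∫ ⟪x, v⟫² dσ = ‖v‖² σ(S) / m`. Hence the mean of `‖DG x‖²` is `‖DG‖_F² / m`, and the rows
of `DG` are `(-(A⁻¹)ₖ ⊗ y, (A⁻¹)ₖ)`, of squared norm `‖(A⁻¹)ₖ‖² (1 + ‖y‖²)`. The bound follows from
`‖A⁻¹‖_F² ≤ n ‖A⁻¹‖²`, as every column of `A⁻¹` has norm at most `‖A⁻¹‖`.
-/

open MeasureTheory Matrix Metric Set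
open scoped Pointwise RealInnerProductSpace

noncomputable section

variable {E : Type*} [NormedAddCommGroup E]

namespace LinearIsometryEquiv

variable [NormedSpace ℝ E] [MeasurableSpace E] [BorelSpace E]

def unitSphereEquiv (e : E ≃ₗᵢ[ℝ] E) : sphere (0 : E) 1 ≃ᵐ sphere (0 : E) 1 :=
  (e.toHomeomorph.subtype fun x => by simp).toMeasurableEquiv

@[simp]
theorem coe_unitSphereEquiv_apply (e : E ≃ₗᵢ[ℝ] E) (x : sphere (0 : E) 1) :
    (e.unitSphereEquiv x : E) = e x := rfl

theorem measurePreserving_unitSphereEquiv {μ : Measure E} (e : E ≃ₗᵢ[ℝ] E)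
    (he : MeasurePreserving e μ μ) :
    MeasurePreserving e.unitSphereEquiv μ.toSphere μ.toSphere := by
  refine ⟨e.unitSphereEquiv.measurable, Measure.ext fun s hs => ?_⟩
  have hcoe : ((↑) '' (e.unitSphereEquiv ⁻¹' s) : Set E) = e ⁻¹' ((↑) '' s) := by
    ext z
    constructor
    · rintro ⟨x, hx, rfl⟩
      exact ⟨_, hx, rfl⟩
    · rintro ⟨x, hx, hxz⟩
      have hz : z ∈ sphere (0 : E) 1 := by
        have := x.2
        rw [hxz] at this
        simpa using this
      refine ⟨⟨z, hz⟩, ?_, rfl⟩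
      rwa [mem_preimage, show e.unitSphereEquiv ⟨z, hz⟩ = x from Subtype.ext hxz.symm]
  have hsmul : Ioo (0 : ℝ) 1 • (e ⁻¹' ((↑) '' s)) = e ⁻¹' (Ioo (0 : ℝ) 1 • ((↑) '' s)) := by
    ext z
    simp only [mem_smul, mem_preimage]
    constructor
    · rintro ⟨r, hr, x, hx, rfl⟩
      exact ⟨r, hr, e x, hx, (e.map_smul r x).symm⟩
    · rintro ⟨r, hr, x, hx, hxz⟩
      refine ⟨r, hr, e.symm x, by simpa using hx, ?_⟩
      rw [← e.symm_apply_apply z, ← hxz, e.symm.map_smul]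
  rw [Measure.map_apply e.unitSphereEquiv.measurable hs,
    Measure.toSphere_apply' _ (e.unitSphereEquiv.measurable hs), Measure.toSphere_apply' _ hs,
    hcoe, hsmul, he.measure_preimage_emb e.toHomeomorph.measurableEmbedding]

end LinearIsometryEquiv

section InnerProductSpace

variable [InnerProductSpace ℝ E] [FiniteDimensional ℝ E] [MeasurableSpace E] [BorelSpace E]

theorem integral_inner_sq_toSphere_eq_of_norm_eq {v w : E} (h : ‖v‖ = ‖w‖) :
    ∫ x : sphere (0 : E) 1, ⟪(x : E), v⟫ ^ 2 ∂(volume : Measure E).toSphere =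
      ∫ x : sphere (0 : E) 1, ⟪(x : E), w⟫ ^ 2 ∂(volume : Measure E).toSphere := by
  set e := (ℝ ∙ (v - w))ᗮ.reflection
  rw [← (e.measurePreserving_unitSphereEquiv e.measurePreserving).integral_comp'
    (fun x : sphere (0 : E) 1 => ⟪(x : E), w⟫ ^ 2)]
  congr 1 with x
  rw [LinearIsometryEquiv.coe_unitSphereEquiv_apply, ← Submodule.reflection_sub h,
    LinearIsometryEquiv.inner_map_map]

theorem integrable_inner_sq_toSphere (v : E) :
    Integrable (fun x : sphere (0 : E) 1 => ⟪(x : E), v⟫ ^ 2) (volume : Measure E).toSphere :=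
  (by fun_prop : Continuous _).integrable_of_hasCompactSupport (HasCompactSupport.of_compactSpace _)

theorem finrank_mul_integral_inner_sq_toSphere (v : E) :
    Module.finrank ℝ E * ∫ x : sphere (0 : E) 1, ⟪(x : E), v⟫ ^ 2 ∂(volume : Measure E).toSphere =
      ‖v‖ ^ 2 * (volume : Measure E).toSphere.real univ := by
  set b := stdOrthonormalBasis ℝ E
  have hb : ∀ i, ∫ x : sphere (0 : E) 1, ⟪(x : E), v⟫ ^ 2 ∂(volume : Measure E).toSphere =
      ‖v‖ ^ 2 * ∫ x : sphere (0 : E) 1, ⟪(x : E), b i⟫ ^ 2 ∂(volume : Measure E).toSphere := by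
    intro i
    rw [integral_inner_sq_toSphere_eq_of_norm_eq (w := ‖v‖ • b i) (by simp [norm_smul]),
      ← integral_const_mul]
    simp [inner_smul_right, mul_pow]
  calc _ = ‖v‖ ^ 2 * ∑ i, ∫ x : sphere (0 : E) 1, ⟪(x : E), b i⟫ ^ 2
        ∂(volume : Measure E).toSphere := by
        rw [Finset.mul_sum, Finset.sum_congr rfl fun i _ => (hb i).symm]
        simp
    _ = ‖v‖ ^ 2 * ∫ x : sphere (0 : E) 1, ∑ i, ⟪(x : E), b i⟫ ^ 2
        ∂(volume : Measure E).toSphere := by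
        rw [integral_finsetSum _ fun i _ => integrable_inner_sq_toSphere (b i)]
    _ = _ := by
        simp only [b.sum_sq_inner_left]
        simp

end InnerProductSpace

section Matrix

variable {ι κ : Type*} [Fintype ι] [DecidableEq ι] [Fintype κ]

theorem norm_toEuclideanLin_sq (M : Matrix κ ι ℝ) (x : EuclideanSpace ℝ ι) :
    ‖toEuclideanLin M x‖ ^ 2 = ∑ k, ⟪x, WithLp.toLp 2 (M k)⟫ ^ 2 := by
  simp [EuclideanSpace.norm_sq_eq, Matrix.toLpLin_apply, mulVec, dotProduct, PiLp.inner_apply]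

theorem card_mul_integral_norm_toEuclideanLin_sq (M : Matrix κ ι ℝ) :
    Fintype.card ι * ∫ x : sphere (0 : EuclideanSpace ℝ ι) 1, ‖toEuclideanLin M x‖ ^ 2
        ∂(volume : Measure (EuclideanSpace ℝ ι)).toSphere =
      (∑ k, ∑ i, M k i ^ 2) * (volume : Measure (EuclideanSpace ℝ ι)).toSphere.real univ := by
  simp_rw [norm_toEuclideanLin_sq]
  rw [integral_finsetSum _ fun k _ => integrable_inner_sq_toSphere _, Finset.mul_sum,
    Finset.sum_mul]
  refine Finset.sum_congr rfl fun k _ => ?_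
  rw [← finrank_euclideanSpace (𝕜 := ℝ), finrank_mul_integral_inner_sq_toSphere,
    EuclideanSpace.norm_sq_eq]
  simp

theorem measureReal_univ_inv_mul_integral_norm_toEuclideanLin_sq (M : Matrix κ ι ℝ) :
    ((volume : Measure (EuclideanSpace ℝ ι)).toSphere.real univ)⁻¹ *
        ∫ x : sphere (0 : EuclideanSpace ℝ ι) 1, ‖toEuclideanLin M x‖ ^ 2
          ∂(volume : Measure (EuclideanSpace ℝ ι)).toSphere =
      (∑ k, ∑ i, M k i ^ 2) / Fintype.card ι := by
  have hM := card_mul_integral_norm_toEuclideanLin_sq M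
  rw [Measure.toSphere_real_apply_univ, finrank_euclideanSpace] at hM ⊢
  rcases eq_or_ne (Fintype.card ι : ℝ) 0 with hι | hι
  · simp [hι]
  have hball : 0 < (volume : Measure (EuclideanSpace ℝ ι)).real (ball 0 1) :=
    ENNReal.toReal_pos (measure_ball_pos _ _ one_pos).ne' measure_ball_lt_top.ne
  rw [mul_left_comm, mul_right_inj' hι] at hM
  rw [hM]
  field_simp

theorem sum_sq_le_card_mul_opNorm_sq (M : Matrix κ ι ℝ) :
    ∑ k, ∑ i, M k i ^ 2 ≤ Fintype.card ι * ‖(toEuclideanLin M).toContinuousLinearMap‖ ^ 2 := by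
  set T := (toEuclideanLin M).toContinuousLinearMap
  have hcol : ∀ i, ∑ k, M k i ^ 2 ≤ ‖T‖ ^ 2 := fun i => by
    have hi : ‖T (EuclideanSpace.single i 1)‖ ^ 2 = ∑ k, M k i ^ 2 := by
      simp [T, EuclideanSpace.norm_sq_eq, Matrix.toLpLin_apply]
    rw [← hi]
    gcongr
    simpa using T.le_opNorm (EuclideanSpace.single i 1)
  calc ∑ k, ∑ i, M k i ^ 2 = ∑ i, ∑ k, M k i ^ 2 := Finset.sum_comm
    _ ≤ ∑ _i : ι, ‖T‖ ^ 2 := Finset.sum_le_sum fun i _ => hcol i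
    _ = _ := by simp

end Matrix

section SolutionMap

variable {ι ι' κ : Type*} [Fintype ι] [Fintype ι']

/-- The matrix of `(Ȧ, ḃ) ↦ B (ḃ - Ȧ y)`, the derivative of `(A, b) ↦ A⁻¹ b` when `B = A⁻¹` and
`y = A⁻¹ b`; the entry `Ȧ i j` is the coordinate `Sum.inl (i, j)` and `ḃ i` is `Sum.inr i`. -/
def solutionDerivMatrix (B : Matrix κ ι ℝ) (y : EuclideanSpace ℝ ι') :
    Matrix κ ((ι × ι') ⊕ ι) ℝ :=
  of fun k => Sum.elim (fun p => -(B k p.1 * y p.2)) (B k)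

theorem toEuclideanLin_solutionDerivMatrix [DecidableEq ι] [DecidableEq ι'] (B : Matrix κ ι ℝ)
    (y : EuclideanSpace ℝ ι') (x : EuclideanSpace ℝ ((ι × ι') ⊕ ι)) :
    toEuclideanLin (solutionDerivMatrix B y) x =
      toEuclideanLin B ((EuclideanSpace.equiv ι ℝ).symm (fun i => x (Sum.inr i)) -
        toEuclideanLin (of fun i j => x (Sum.inl (i, j))) y) := by
  ext k
  simp only [solutionDerivMatrix, toLpLin_apply, mulVec, dotProduct, of_apply,
    Fintype.sum_sum_type, Fintype.sum_prod_type, Sum.elim_inl, Sum.elim_inr, neg_mul,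
    Finset.sum_neg_distrib, PiLp.continuousLinearEquiv_symm_apply, WithLp.ofLp_sub, Pi.sub_apply,
    mul_sub, Finset.mul_sum, Finset.sum_sub_distrib]
  simp_rw [mul_assoc, mul_comm (y.ofLp _)]
  ring

theorem sum_solutionDerivMatrix_sq [Fintype κ] (B : Matrix κ ι ℝ) (y : EuclideanSpace ℝ ι') :
    ∑ k, ∑ t, solutionDerivMatrix B y k t ^ 2 = (∑ k, ∑ i, B k i ^ 2) * (1 + ‖y‖ ^ 2) := by
  simp only [solutionDerivMatrix, of_apply, Fintype.sum_sum_type, Fintype.sum_prod_type,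
    Sum.elim_inl, Sum.elim_inr, even_two, Even.neg_pow, mul_pow, ← Finset.mul_sum,
    EuclideanSpace.norm_sq_eq, Real.norm_eq_abs, sq_abs, mul_add, mul_one, Finset.sum_mul]
  rw [Finset.sum_add_distrib]
  ring

end SolutionMap

theorem sqrt_div_sqrt_sq_add_self_le {F t : ℝ} (n : ℕ) (ht : 0 ≤ t) (hF : F ≤ n * t ^ 2) :
    √F / √(n ^ 2 + n) ≤ t / √(n + 1) := by
  rcases eq_or_ne n 0 with rfl | hn
  · simpa using ht
  have hn_pos : (0 : ℝ) < n := by positivity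
  have hsplit : √((n : ℝ) ^ 2 + n) = √n * √(n + 1) := by
    rw [← Real.sqrt_mul hn_pos.le]
    ring_nf
  have hsqrtF : √F ≤ √n * t := by
    rw [← Real.sqrt_sq ht, ← Real.sqrt_mul hn_pos.le]
    exact Real.sqrt_le_sqrt hF
  calc √F / √(n ^ 2 + n) ≤ √n * t / (√n * √(n + 1)) := by
        rw [hsplit]
        gcongr
    _ = t / √(n + 1) := by
        rw [mul_div_mul_left _ _ (Real.sqrt_pos.mpr hn_pos).ne']

end

theorem stmt_10_general (n : ℕ) (A : Matrix (Fin n) (Fin n) ℝ)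
    (y : EuclideanSpace ℝ (Fin n)) :
    Real.sqrt
        ((1 / ((volume : Measure (EuclideanSpace ℝ ((Fin n × Fin n) ⊕ Fin n))).toSphere
            Set.univ).toReal) *
          ∫ x : sphere (0 : EuclideanSpace ℝ ((Fin n × Fin n) ⊕ Fin n)) 1,
            ‖Matrix.toEuclideanLin A⁻¹
              ((EuclideanSpace.equiv (Fin n) ℝ).symm
                  (fun k => (x : EuclideanSpace ℝ ((Fin n × Fin n) ⊕ Fin n)) (Sum.inr k)) -
                Matrix.toEuclideanLin
                  (Matrix.of fun i j =>
                    (x : EuclideanSpace ℝ ((Fin n × Fin n) ⊕ Fin n)) (Sum.inl (i, j))) y)‖ ^ 2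
            ∂(volume : Measure (EuclideanSpace ℝ ((Fin n × Fin n) ⊕ Fin n))).toSphere)
      = Real.sqrt (∑ i, ∑ j, (A⁻¹ i j) ^ 2) * Real.sqrt (1 + ‖y‖ ^ 2) /
          Real.sqrt (n ^ 2 + n) ∧
    Real.sqrt (∑ i, ∑ j, (A⁻¹ i j) ^ 2) * Real.sqrt (1 + ‖y‖ ^ 2) / Real.sqrt (n ^ 2 + n)
      ≤ (1 / Real.sqrt (n + 1)) *
          (‖LinearMap.toContinuousLinearMap (Matrix.toEuclideanLin A⁻¹)‖ *
            Real.sqrt (1 + ‖y‖ ^ 2)) := by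
  have hcard : (Fintype.card ((Fin n × Fin n) ⊕ Fin n) : ℝ) = n ^ 2 + n := by
    simp [sq]
  have hFrob : 0 ≤ ∑ i, ∑ j, (A⁻¹ i j) ^ 2 := by positivity
  refine ⟨?_, ?_⟩
  · simp_rw [← toEuclideanLin_solutionDerivMatrix, one_div, ← measureReal_def,
      measureReal_univ_inv_mul_integral_norm_toEuclideanLin_sq, sum_solutionDerivMatrix_sq, hcard]
    rw [Real.sqrt_div (by positivity), Real.sqrt_mul hFrob]
  · calc _ = √(∑ i, ∑ j, (A⁻¹ i j) ^ 2) / √(n ^ 2 + n) * √(1 + ‖y‖ ^ 2) := by ring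
      _ ≤ ‖(toEuclideanLin A⁻¹).toContinuousLinearMap‖ / √(n + 1) * √(1 + ‖y‖ ^ 2) := by
        refine mul_le_mul_of_nonneg_right ?_ (Real.sqrt_nonneg _)
        exact sqrt_div_sqrt_sq_add_self_le n (norm_nonneg _)
          (by simpa using sum_sq_le_card_mul_opNorm_sq A⁻¹)
      _ = _ := by ring

/-- **Average condition number for general linear system solving.**
Let `A` be an invertible `n×n` real matrix, `b ∈ ℝ^n`, `y = A⁻¹ b`, and consider
the condition matrix `DG(Ȧ, ḃ) = A⁻¹(ḃ - Ȧ y)` on the `(n²+n)`-dimensional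
input space `M_n(ℝ) × ℝ^n` (Frobenius times Euclidean inner product).  The
average condition number `κ_av = [(1/vol S^{n²+n-1}) ∫ ‖DG‖²]^{1/2}` equals
`‖A⁻¹‖_F · √(1 + ‖y‖²) / √(n² + n)`, which is at most `1/√(n+1)` times the
operator norm `‖A⁻¹‖ · √(1 + ‖y‖²)` of `DG`. -/
theorem stmt_10 (n : ℕ) (hn : 1 ≤ n) (A : Matrix (Fin n) (Fin n) ℝ)
    (hA : IsUnit A.det) (b : EuclideanSpace ℝ (Fin n))
    (y : EuclideanSpace ℝ (Fin n)) (hy : y = Matrix.toEuclideanLin A⁻¹ b) :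
    Real.sqrt
        ((1 / ((volume : Measure (EuclideanSpace ℝ ((Fin n × Fin n) ⊕ Fin n))).toSphere
            Set.univ).toReal) *
          ∫ x : sphere (0 : EuclideanSpace ℝ ((Fin n × Fin n) ⊕ Fin n)) 1,
            ‖Matrix.toEuclideanLin A⁻¹
              ((EuclideanSpace.equiv (Fin n) ℝ).symm
                  (fun k => (x : EuclideanSpace ℝ ((Fin n × Fin n) ⊕ Fin n)) (Sum.inr k)) -
                Matrix.toEuclideanLin
                  (Matrix.of fun i j =>
                    (x : EuclideanSpace ℝ ((Fin n × Fin n) ⊕ Fin n)) (Sum.inl (i, j))) y)‖ ^ 2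
            ∂(volume : Measure (EuclideanSpace ℝ ((Fin n × Fin n) ⊕ Fin n))).toSphere)
      = Real.sqrt (∑ i, ∑ j, (A⁻¹ i j) ^ 2) * Real.sqrt (1 + ‖y‖ ^ 2) /
          Real.sqrt (n ^ 2 + n) ∧
    Real.sqrt (∑ i, ∑ j, (A⁻¹ i j) ^ 2) * Real.sqrt (1 + ‖y‖ ^ 2) / Real.sqrt (n ^ 2 + n)
      ≤ (1 / Real.sqrt (n + 1)) *
          (‖LinearMap.toContinuousLinearMap (Matrix.toEuclideanLin A⁻¹)‖ *
            Real.sqrt (1 + ‖y‖ ^ 2)) :=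
  stmt_10_general n A y
end

section
/- Let u, v ∈ ℂ^n with ⟨u, v⟩ ≠ 0, where ⟨·,·⟩ is the standard Hermitian inner product. Consider the linear functional DG₂ : M_n(ℂ) → ℂ given by DG₂(Ȧ) = ⟨u, Ȧv⟩ / ⟨u, v⟩, where M_n(ℂ) carries the Frobenius Hermitian inner product. Then the operator norm of DG₂ equals ‖u‖ · ‖v‖ / |⟨u, v⟩|. -/
open Matrix

/-!
Vectorising matrices identifies `M_n(ℂ)` with its Frobenius inner product isometrically with
`ℂ^(n×n)`, and under this identification `⟨u, Ȧ v⟩ = ⟨vec (u v*), vec Ȧ⟩`. So `DG₂` is the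
functional `x ↦ ⟨a, x⟩ / ⟨u, v⟩` with `a = vec (u v*)`; by Cauchy–Schwarz its maximum on the unit
sphere is `‖a‖ / |⟨u, v⟩|`, attained at `x = a / ‖a‖`, and `‖a‖ = ‖u‖ ‖v‖`.
-/

open scoped InnerProductSpace

theorem isGreatest_norm_inner_div_over_unit_vectors {𝕜 E : Type*} [RCLike 𝕜]
    [NormedAddCommGroup E] [InnerProductSpace 𝕜 E] {a : E} (ha : a ≠ 0) (z : 𝕜) :
    IsGreatest {c : ℝ | ∃ x : E, ‖x‖ = 1 ∧ c = ‖⟪a, x⟫_𝕜 / z‖} (‖a‖ / ‖z‖) := by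
  have ha' : ‖a‖ ≠ 0 := norm_ne_zero_iff.mpr ha
  refine ⟨⟨(‖a‖⁻¹ : 𝕜) • a, ?_, ?_⟩, ?_⟩
  · rw [norm_smul, norm_inv, RCLike.norm_ofReal, abs_norm, inv_mul_cancel₀ ha']
  · rw [inner_smul_right, inner_self_eq_norm_sq_to_K, norm_div, sq, ← mul_assoc,
      inv_mul_cancel₀ (RCLike.ofReal_ne_zero.mpr ha'), one_mul, RCLike.norm_ofReal, abs_norm]
  · rintro c ⟨x, hx, rfl⟩
    rw [norm_div]
    gcongr
    simpa [hx] using norm_inner_le_norm a x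

namespace Matrix

variable {𝕜 m n : Type*}

def toEuclideanVec (A : Matrix m n 𝕜) : EuclideanSpace 𝕜 (m × n) :=
  WithLp.toLp 2 fun p => A p.1 p.2

theorem toEuclideanVec_surjective : Function.Surjective (toEuclideanVec : Matrix m n 𝕜 → _) :=
  fun x => ⟨of fun i j => x (i, j), rfl⟩

variable [RCLike 𝕜] [Fintype m] [Fintype n]

theorem norm_toEuclideanVec (A : Matrix m n 𝕜) :
    ‖toEuclideanVec A‖ = √(∑ i, ∑ j, ‖A i j‖ ^ 2) := by
  simp [EuclideanSpace.norm_eq, toEuclideanVec, Fintype.sum_prod_type]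

theorem norm_toEuclideanVec_vecMulVec (u : EuclideanSpace 𝕜 m) (v : EuclideanSpace 𝕜 n) :
    ‖toEuclideanVec (vecMulVec u.ofLp (star v.ofLp))‖ = ‖u‖ * ‖v‖ := by
  rw [norm_toEuclideanVec, EuclideanSpace.norm_eq u, EuclideanSpace.norm_eq v,
    ← Real.sqrt_mul (by positivity), Finset.sum_mul_sum]
  simp [vecMulVec_apply, mul_pow]

theorem inner_toEuclideanLin_eq_inner_toEuclideanVec [DecidableEq n] (u : EuclideanSpace 𝕜 m)
    (v : EuclideanSpace 𝕜 n) (A : Matrix m n 𝕜) :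
    ⟪u, toEuclideanLin A v⟫_𝕜 =
      ⟪toEuclideanVec (vecMulVec u.ofLp (star v.ofLp)), toEuclideanVec A⟫_𝕜 := by
  simp only [PiLp.inner_apply, RCLike.inner_apply, toLpLin_apply, toEuclideanVec,
    Fintype.sum_prod_type, vecMulVec_apply, mulVec, dotProduct, Finset.sum_mul, Pi.star_apply,
    RCLike.star_def, map_mul, RCLike.conj_conj]
  exact Finset.sum_congr rfl fun i _ => Finset.sum_congr rfl fun j _ => by ring

end Matrix

theorem stmt_11_general (n : ℕ) (u v : EuclideanSpace ℂ (Fin n))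
    (huv : (inner ℂ u v : ℂ) ≠ 0) :
    IsGreatest
      {c : ℝ | ∃ dA : Matrix (Fin n) (Fin n) ℂ,
        Real.sqrt (∑ i, ∑ j, ‖dA i j‖ ^ 2) = 1 ∧
        c = ‖(inner ℂ u (Matrix.toEuclideanLin dA v) : ℂ) / (inner ℂ u v : ℂ)‖}
      (‖u‖ * ‖v‖ / ‖(inner ℂ u v : ℂ)‖) := by
  have hu : u ≠ 0 := by rintro rfl; simp at huv
  have hv : v ≠ 0 := by rintro rfl; simp at huv
  have ha : toEuclideanVec (vecMulVec u.ofLp (star v.ofLp)) ≠ 0 := by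
    rw [← norm_ne_zero_iff, norm_toEuclideanVec_vecMulVec]
    exact mul_ne_zero (norm_ne_zero_iff.mpr hu) (norm_ne_zero_iff.mpr hv)
  convert isGreatest_norm_inner_div_over_unit_vectors ha ⟪u, v⟫_ℂ using 1
  · ext c
    simp only [Set.mem_ofPred_eq, toEuclideanVec_surjective.exists, norm_toEuclideanVec,
      inner_toEuclideanLin_eq_inner_toEuclideanVec]
  · rw [norm_toEuclideanVec_vecMulVec]

/-- **The eigenvalue condition number.**
Let `u, v ∈ ℂ^n` with `⟨u, v⟩ ≠ 0`.  The operator norm of the functional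
`DG₂(Ȧ) = ⟨u, Ȧ v⟩ / ⟨u, v⟩` on `M_n(ℂ)` with the Frobenius Hermitian inner
product — the greatest value of `|DG₂(Ȧ)|` over matrices of Frobenius norm 1 —
equals `‖u‖ · ‖v‖ / |⟨u, v⟩|`. -/
theorem stmt_11 (n : ℕ) (hn : 1 ≤ n) (u v : EuclideanSpace ℂ (Fin n))
    (huv : (inner ℂ u v : ℂ) ≠ 0) :
    IsGreatest
      {c : ℝ | ∃ dA : Matrix (Fin n) (Fin n) ℂ,
        Real.sqrt (∑ i, ∑ j, ‖dA i j‖ ^ 2) = 1 ∧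
        c = ‖(inner ℂ u (Matrix.toEuclideanLin dA v) : ℂ) / (inner ℂ u v : ℂ)‖}
      (‖u‖ * ‖v‖ / ‖(inner ℂ u v : ℂ)‖) :=
  stmt_11_general n u v huv
end

section
/- Let u, v ∈ ℂ^n with ⟨u, v⟩ ≠ 0, and let DG₂ : M_n(ℂ) → ℂ be the functional DG₂(Ȧ) = ⟨u, Ȧv⟩ / ⟨u, v⟩. Viewing M_n(ℂ) as a real inner product space of dimension 2n² (with inner product Re trace(B*A)) and ℂ as ℝ², the average condition number of DG₂ equals (1/n) · (‖u‖ · ‖v‖ / |⟨u, v⟩|); that is, κ_av₂(A, λ) = κ₂(A, λ)/n. -/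
/-!
Writing `Ȧ = Σ_a x_a E_a` in the real basis `E_{ij}, i·E_{ij}` of `M_n(ℂ)`, the integrand is
`‖Σ_a x_a β_a‖²` with `β_a = DG₂(E_a)`. On the unit sphere of `ℝ^m`, reflecting one coordinate
shows `∫ x_a x_b = 0` for `a ≠ b`, and permuting coordinates shows that all `∫ x_a²` agree, so they
equal `vol(S^{m-1}) / m` because `Σ_a x_a² = 1`. Hence the mean of `‖DG₂‖²` over the sphere is
`Σ_a ‖β_a‖² / m = 2 ‖u‖² ‖v‖² / |⟨u, v⟩|² / (2n²)`.
-/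

open MeasureTheory Matrix Metric Set
open scoped Pointwise

theorem LinearEquiv.set_smul_preimage {R E F : Type*} [Semiring R] [AddCommMonoid E]
    [AddCommMonoid F] [Module R E] [Module R F] (e : E ≃ₗ[R] F) (s : Set R) (t : Set F) :
    s • e ⁻¹' t = e ⁻¹' (s • t) := by
  ext x
  simp only [mem_smul, mem_preimage]
  constructor
  · rintro ⟨r, hr, y, hy, rfl⟩
    exact ⟨r, hr, e y, hy, (e.map_smul r y).symm⟩
  · rintro ⟨r, hr, z, hz, hzx⟩
    exact ⟨r, hr, e.symm z, by simpa using hz, e.injective (by simp [hzx])⟩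

namespace LinearIsometryEquiv

variable {E : Type*} [NormedAddCommGroup E] [NormedSpace ℝ E]

def unitSphereHomeomorph (e : E ≃ₗᵢ[ℝ] E) : sphere (0 : E) 1 ≃ₜ sphere (0 : E) 1 :=
  e.toHomeomorph.sets (by ext; simp)

@[simp]
theorem coe_unitSphereHomeomorph (e : E ≃ₗᵢ[ℝ] E) (y : sphere (0 : E) 1) :
    (e.unitSphereHomeomorph y : E) = e y :=
  rfl

variable [MeasurableSpace E] [BorelSpace E] {μ : Measure E}

theorem measurePreserving_unitSphereHomeomorph (e : E ≃ₗᵢ[ℝ] E)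
    (he : MeasurePreserving e μ μ) :
    MeasurePreserving e.unitSphereHomeomorph μ.toSphere μ.toSphere := by
  refine ⟨e.unitSphereHomeomorph.measurable, Measure.ext fun s hs => ?_⟩
  have hpre : ((↑) '' (e.unitSphereHomeomorph ⁻¹' s) : Set E) = e ⁻¹' ((↑) '' s) := by
    ext x
    constructor
    · rintro ⟨y, hy, rfl⟩
      exact ⟨_, hy, rfl⟩
    · rintro ⟨y, hy, hyx⟩
      have hx : x ∈ sphere (0 : E) 1 :=
        mem_sphere_zero_iff_norm.2 (by rw [← e.norm_map, ← hyx, norm_eq_of_mem_sphere])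
      have : e.unitSphereHomeomorph ⟨x, hx⟩ = y := Subtype.ext hyx.symm
      exact ⟨⟨x, hx⟩, by rwa [mem_preimage, this], rfl⟩
  rw [Measure.map_apply e.unitSphereHomeomorph.measurable hs,
    Measure.toSphere_apply' _ (e.unitSphereHomeomorph.measurable hs), Measure.toSphere_apply' _ hs,
    hpre, ← e.coe_toLinearEquiv, LinearEquiv.set_smul_preimage, e.coe_toLinearEquiv,
    he.measure_preimage_emb e.toHomeomorph.measurableEmbedding]

theorem integral_toSphere_comp_unitSphereHomeomorph {G : Type*} [NormedAddCommGroup G]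
    [NormedSpace ℝ G] (e : E ≃ₗᵢ[ℝ] E) (he : MeasurePreserving e μ μ)
    (g : sphere (0 : E) 1 → G) :
    ∫ y, g (e.unitSphereHomeomorph y) ∂μ.toSphere = ∫ y, g y ∂μ.toSphere :=
  (e.measurePreserving_unitSphereHomeomorph he).integral_comp
    e.unitSphereHomeomorph.measurableEmbedding g

end LinearIsometryEquiv

section EuclideanSphere

variable {ι : Type*} [Fintype ι]

local notation "σ" => Measure.toSphere (volume : Measure (EuclideanSpace ℝ ι))
local notation "𝕊" => sphere (0 : EuclideanSpace ℝ ι) 1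

theorem integrable_sphere_coord_mul_coord (a b : ι) :
    Integrable (fun y : 𝕊 => y.1 a * y.1 b) σ := by
  have hcoord : ∀ c, Continuous fun y : 𝕊 => y.1 c :=
    fun c => (EuclideanSpace.proj c).continuous.comp continuous_subtype_val
  exact ((hcoord a).mul (hcoord b)).integrable_of_hasCompactSupport (.of_compactSpace _)

theorem integral_sphere_coord_mul_coord_of_ne [DecidableEq ι] {a b : ι} (hab : a ≠ b) :
    ∫ y, y.1 a * y.1 b ∂σ = 0 := by
  let e := LinearIsometryEquiv.piLpCongrRight 2 fun i : ι =>
    if i = a then LinearIsometryEquiv.neg ℝ else LinearIsometryEquiv.refl ℝ ℝ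
  have h := e.integral_toSphere_comp_unitSphereHomeomorph e.measurePreserving
    fun y => y.1 a * y.1 b
  simp only [LinearIsometryEquiv.coe_unitSphereHomeomorph, LinearIsometryEquiv.piLpCongrRight_apply,
    ↓reduceIte, LinearIsometryEquiv.coe_neg, hab.symm, LinearIsometryEquiv.coe_refl, id_eq, neg_mul,
    integral_neg, e] at h
  linarith

theorem integral_sphere_coord_sq (a : ι) :
    ∫ y, y.1 a ^ 2 ∂σ = (σ univ).toReal / Fintype.card ι := by
  classical
  have hswap : ∀ c, ∫ y, y.1 c ^ 2 ∂σ = ∫ y, y.1 a ^ 2 ∂σ := by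
    intro c
    let e := LinearIsometryEquiv.piLpCongrLeft 2 ℝ ℝ (Equiv.swap c a)
    have h := e.integral_toSphere_comp_unitSphereHomeomorph e.measurePreserving
      fun y => y.1 a ^ 2
    simpa [e, Equiv.piCongrLeft'_apply] using h
  have hsum : ∀ y : 𝕊, ∑ c, y.1 c ^ 2 = 1 := by
    intro y
    have h := EuclideanSpace.norm_sq_eq y.1
    rw [norm_eq_of_mem_sphere, one_pow] at h
    simpa using h.symm
  have htotal : Fintype.card ι * ∫ y, y.1 a ^ 2 ∂σ = (σ univ).toReal := by
    calc Fintype.card ι * ∫ y, y.1 a ^ 2 ∂σ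
        = ∑ c, ∫ y, y.1 c ^ 2 ∂σ := by simp [hswap]
      _ = ∫ y, ∑ c, y.1 c ^ 2 ∂σ := (integral_finsetSum _ fun c _ => by
          simpa [pow_two] using integrable_sphere_coord_mul_coord c c).symm
      _ = (σ univ).toReal := by simp [hsum, measureReal_def]
  have hcard : (Fintype.card ι : ℝ) ≠ 0 := by
    have : Nonempty ι := ⟨a⟩
    positivity
  rw [← htotal, mul_div_cancel_left₀ _ hcard]

theorem integral_sphere_coord_mul_coord [DecidableEq ι] (a b : ι) :
    ∫ y, y.1 a * y.1 b ∂σ = if a = b then (σ univ).toReal / Fintype.card ι else 0 := by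
  split_ifs with hab
  · rw [← hab, ← integral_sphere_coord_sq a]
    simp only [pow_two]
  · exact integral_sphere_coord_mul_coord_of_ne hab

theorem integral_sphere_norm_sum_smul_sq {F : Type*} [NormedAddCommGroup F]
    [InnerProductSpace ℝ F] (β : ι → F) :
    ∫ y, ‖∑ a, y.1 a • β a‖ ^ 2 ∂σ =
      (∑ a, ‖β a‖ ^ 2) * (σ univ).toReal / Fintype.card ι := by
  classical
  have hexpand : ∀ y : 𝕊, ‖∑ a, y.1 a • β a‖ ^ 2 =
      ∑ a, ∑ b, y.1 a * y.1 b * inner ℝ (β a) (β b) := by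
    intro y
    simp only [← real_inner_self_eq_norm_sq, sum_inner, inner_sum, real_inner_smul_left,
      real_inner_smul_right]
    refine Finset.sum_congr rfl fun a _ => Finset.sum_congr rfl fun b _ => ?_
    rw [real_inner_comm]
    ring
  simp_rw [hexpand]
  rw [integral_finsetSum _ fun a _ => integrable_finsetSum _ fun b _ =>
    (integrable_sphere_coord_mul_coord a b).mul_const _]
  simp_rw [integral_finsetSum _ fun b _ => (integrable_sphere_coord_mul_coord _ b).mul_const _,
    integral_mul_const, integral_sphere_coord_mul_coord, ite_mul, zero_mul, Finset.sum_ite_eq,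
    Finset.mem_univ, if_true, real_inner_self_eq_norm_sq, Finset.sum_mul, Finset.sum_div]
  exact Finset.sum_congr rfl fun a _ => by ring

end EuclideanSphere

section MatrixFunctional

open Complex ComplexConjugate

variable {ι : Type*} [Fintype ι]

theorem inner_toEuclideanLin_ofReIm [DecidableEq ι] (u v : EuclideanSpace ℂ ι)
    (x : EuclideanSpace ℝ ((ι × ι) × Fin 2)) :
    inner ℂ u (toEuclideanLin (of fun i j => (x ((i, j), 0) : ℂ) + x ((i, j), 1) * I) v) =
      ∑ a, x a • (conj (u a.1.1) * v a.1.2 * ![1, I] a.2) := by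
  simp only [PiLp.inner_apply, RCLike.inner_apply, toLpLin_apply, mulVec, dotProduct,
    of_apply, Fintype.sum_prod_type, Fin.sum_univ_two, Complex.real_smul, Finset.sum_mul]
  refine Finset.sum_congr rfl fun i _ => Finset.sum_congr rfl fun j _ => ?_
  simp only [cons_val_zero, cons_val_one]
  ring

theorem sum_norm_sq_conj_mul_mul_reIm (u v : EuclideanSpace ℂ ι) :
    ∑ a : (ι × ι) × Fin 2, ‖conj (u a.1.1) * v a.1.2 * ![1, I] a.2‖ ^ 2 =
      2 * (‖u‖ ^ 2 * ‖v‖ ^ 2) := by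
  rw [EuclideanSpace.norm_sq_eq, EuclideanSpace.norm_sq_eq, Finset.sum_mul_sum, Finset.mul_sum,
    Fintype.sum_prod_type, Fintype.sum_prod_type]
  refine Finset.sum_congr rfl fun i _ => ?_
  rw [Finset.mul_sum]
  refine Finset.sum_congr rfl fun j _ => ?_
  simp only [Fin.sum_univ_two, Complex.norm_mul, RCLike.norm_conj, mul_pow, cons_val_zero,
    cons_val_one, cons_val_fin_one, norm_one, norm_I, one_pow, mul_one]
  ring

end MatrixFunctional

/-- **Average eigenvalue condition number.**
Let `u, v ∈ ℂ^n` with `⟨u, v⟩ ≠ 0` and consider the functional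
`DG₂(Ȧ) = ⟨u, Ȧ v⟩ / ⟨u, v⟩` on `M_n(ℂ)`, viewed as a real-linear map from the
`2n²`-dimensional real inner product space `M_n(ℂ)` (real part of the Frobenius
Hermitian inner product, identified with `ℝ^{2n²}` via real and imaginary parts
of the entries) to `ℂ ≅ ℝ²`.  Its average condition number
`κ_av = [(1/vol S^{2n²-1}) ∫_{S^{2n²-1}} ‖DG₂‖²]^{1/2}` equals
`(1/n) · ‖u‖ · ‖v‖ / |⟨u, v⟩|`, i.e. `κ_av₂(A, λ) = κ₂(A, λ)/n`. -/
theorem stmt_12 (n : ℕ) (hn : 1 ≤ n) (u v : EuclideanSpace ℂ (Fin n))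
    (huv : (inner ℂ u v : ℂ) ≠ 0) :
    Real.sqrt
        ((1 / ((volume : Measure (EuclideanSpace ℝ ((Fin n × Fin n) × Fin 2))).toSphere
            Set.univ).toReal) *
          ∫ x : sphere (0 : EuclideanSpace ℝ ((Fin n × Fin n) × Fin 2)) 1,
            ‖(inner ℂ u (Matrix.toEuclideanLin
                (Matrix.of fun i j =>
                  ((x : EuclideanSpace ℝ ((Fin n × Fin n) × Fin 2)) ((i, j), 0) : ℂ) +
                    (x : EuclideanSpace ℝ ((Fin n × Fin n) × Fin 2)) ((i, j), 1) * Complex.I) v) : ℂ) /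
              (inner ℂ u v : ℂ)‖ ^ 2
            ∂(volume : Measure (EuclideanSpace ℝ ((Fin n × Fin n) × Fin 2))).toSphere)
      = (1 / n) * (‖u‖ * ‖v‖ / ‖(inner ℂ u v : ℂ)‖) := by
  set c : ℂ := inner ℂ u v
  set β : (Fin n × Fin n) × Fin 2 → ℂ := fun a =>
    starRingEnd ℂ (u a.1.1) * v a.1.2 * ![1, Complex.I] a.2 / c
  rw [integral_congr_ae
      (g := fun x : sphere (0 : EuclideanSpace ℝ _) 1 => ‖∑ a, x.1 a • β a‖ ^ 2)
      (.of_forall fun x => by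
        simp_rw [inner_toEuclideanLin_ofReIm, Finset.sum_div, β, smul_div_assoc]),
    integral_sphere_norm_sum_smul_sq]
  have hβ : ∑ a, ‖β a‖ ^ 2 = 2 * (‖u‖ ^ 2 * ‖v‖ ^ 2) / ‖c‖ ^ 2 := by
    simp_rw [β, norm_div, div_pow, ← Finset.sum_div, sum_norm_sq_conj_mul_mul_reIm]
  have : NeZero n := ⟨by omega⟩
  have hσ : ((volume : Measure (EuclideanSpace ℝ ((Fin n × Fin n) × Fin 2))).toSphere
      Set.univ).toReal ≠ 0 :=
    ENNReal.toReal_ne_zero.2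
      ⟨Measure.measure_univ_ne_zero.2 (Measure.toSphere_ne_zero _), measure_ne_top _ _⟩
  have hc : ‖c‖ ≠ 0 := norm_ne_zero_iff.2 huv
  rw [hβ, ← Real.sqrt_sq (show 0 ≤ 1 / n * (‖u‖ * ‖v‖ / ‖c‖) by positivity)]
  congr 1
  simp only [Fintype.card_prod, Fintype.card_fin]
  field_simp
  push_cast
  ring
end

section
/- Let A be a k×p complex matrix of rank r (with r ≥ 1, r < p, r ≤ k), let B be the Moore–Penrose inverse of A, let ℓ = p − r, and let M be a p×ℓ complex matrix with M*M = I whose columns span the kernel of A. Consider the linear map Φ : M_{k,p}(ℂ) → M_{p,ℓ}(ℂ) given by Φ(Ȧ) = −B Ȧ M, where both spaces carry the Frobenius Hermitian inner product. Then the Frobenius (Hilbert–Schmidt) norm of Φ equals √(p − r) · ‖B‖_F, where ‖B‖_F is the Frobenius norm of B; in particular κ_F(A, M) = √(p−r)·‖A†‖_F. -/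
open Matrix

/-!
Since `(B E_{ab} M)_{ij} = B_{ia} M_{bj}`, the squared Hilbert–Schmidt norm of `Ȧ ↦ -B Ȧ M`,
summed over the standard basis, factors as `‖B‖_F² ‖M‖_F²`; and orthonormal columns give
`‖M‖_F² = trace (Mᴴ M) = p - r`.
-/

namespace Matrix

variable {l m n o : Type*}

theorem mul_single_mul_apply {α : Type*} [Fintype m] [Fintype n] [DecidableEq m]
    [DecidableEq n] [Semiring α] (X : Matrix l m α) (Y : Matrix n o α) (a : m) (b : n) (c : α)
    (i : l) (j : o) :
    (X * single a b c * Y) i j = X i a * c * Y b j := by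
  simp [mul_apply, single, ite_and]

theorem sum_norm_sq_mul_single_one_mul {α : Type*} [Fintype l] [Fintype m] [Fintype n]
    [Fintype o] [DecidableEq m] [DecidableEq n] [NormedRing α] [NormMulClass α]
    (X : Matrix l m α) (Y : Matrix n o α) :
    ∑ a : m, ∑ b : n, ∑ i : l, ∑ j : o, ‖(X * single a b (1 : α) * Y) i j‖ ^ 2
      = (∑ i, ∑ a, ‖X i a‖ ^ 2) * ∑ b, ∑ j, ‖Y b j‖ ^ 2 := by
  simp only [mul_single_mul_apply, mul_one, norm_mul, mul_pow, ← Finset.sum_mul_sum]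
  rw [Finset.sum_comm (f := fun i a => ‖X i a‖ ^ 2)]

theorem conjTranspose_mul_self_apply_self {𝕜 : Type*} [RCLike 𝕜] [Fintype m]
    (A : Matrix m n 𝕜) (j : n) : (Aᴴ * A) j j = ∑ i, ((‖A i j‖ ^ 2 : ℝ) : 𝕜) := by
  simp [mul_apply, RCLike.conj_mul]

theorem sum_norm_sq_eq_card_of_conjTranspose_mul_self_eq_one {𝕜 : Type*} [RCLike 𝕜]
    [Fintype m] [Fintype n] [DecidableEq n] {A : Matrix m n 𝕜} (hA : Aᴴ * A = 1) :
    ∑ i, ∑ j, ‖A i j‖ ^ 2 = Fintype.card n := by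
  have hcol (j : n) : ∑ i, ‖A i j‖ ^ 2 = 1 := by
    have h := conjTranspose_mul_self_apply_self A j
    rw [hA, one_apply_eq] at h
    exact_mod_cast h.symm
  rw [Finset.sum_comm]
  simp [hcol]

end Matrix

theorem stmt_15_general (k p r : ℕ)
    (B : Matrix (Fin p) (Fin k) ℂ)
    (M : Matrix (Fin p) (Fin (p - r)) ℂ) (hM : Mᴴ * M = 1) :
    Real.sqrt (∑ a : Fin k, ∑ b : Fin p,
        ∑ i, ∑ j, ‖(-(B * Matrix.single a b (1 : ℂ) * M)) i j‖ ^ 2)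
      = Real.sqrt (p - r : ℕ) * Real.sqrt (∑ i, ∑ j, ‖B i j‖ ^ 2) := by
  simp only [Matrix.neg_apply, norm_neg]
  rw [sum_norm_sq_mul_single_one_mul, sum_norm_sq_eq_card_of_conjTranspose_mul_self_eq_one hM,
    Fintype.card_fin, Real.sqrt_mul (by positivity), mul_comm]

/-- **Frobenius condition number of the kernel-finding problem.**
Let `A` be a `k×p` complex matrix of rank `r` (`1 ≤ r`, `r < p`, `r ≤ k`), `B`
its Moore–Penrose inverse (characterized by the four Penrose equations), and
`M` a `p×(p-r)` matrix with orthonormal columns spanning `ker A`.  The Frobenius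
(Hilbert–Schmidt) norm of the condition matrix `Φ(Ȧ) = -B Ȧ M` between the
Frobenius Hermitian inner product spaces `M_{k,p}(ℂ)` and `M_{p,p-r}(ℂ)` —
computed over the orthonormal basis of standard basis matrices — equals
`√(p - r) · ‖B‖_F = √(p-r) · ‖A†‖_F`. -/
theorem stmt_15 (k p r : ℕ) (hr : 1 ≤ r) (hrp : r < p) (hrk : r ≤ k)
    (A : Matrix (Fin k) (Fin p) ℂ) (hrank : A.rank = r)
    (B : Matrix (Fin p) (Fin k) ℂ)
    (hB1 : A * B * A = A) (hB2 : B * A * B = B)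
    (hB3 : (A * B)ᴴ = A * B) (hB4 : (B * A)ᴴ = B * A)
    (M : Matrix (Fin p) (Fin (p - r)) ℂ) (hM : Mᴴ * M = 1)
    (hker : Submodule.span ℂ (Set.range Mᵀ) = LinearMap.ker A.mulVecLin) :
    Real.sqrt (∑ a : Fin k, ∑ b : Fin p,
        ∑ i, ∑ j, ‖(-(B * Matrix.single a b (1 : ℂ) * M)) i j‖ ^ 2)
      = Real.sqrt (p - r : ℕ) * Real.sqrt (∑ i, ∑ j, ‖B i j‖ ^ 2) :=
  stmt_15_general k p r B M hM
end
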